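/- Let v₁,…,v_M be reals, 1 ≤ m ≤ M, and H_{m:} be the collection of all nonempty subsets C ⊆ {1,…,M} with |C| ≥ m. Then min over C ∈ H_{m:} of (1/|C|) Σ_{s∈C} v_s equals the average of the m smallest values among v₁,…,v_M. -/
import Mathlib


open Finset

lemma base_sum_le {M : ℕ} (v : Fin M → ℝ) (Cm C : Finset (Fin M))
    (hcard : C.card = Cm.card)
    (hmin : ∀ s ∈ Cm, ∀ s' ∉ Cm, v s ≤ v s') :
    ∑ s ∈ Cm, v s ≤ ∑ s ∈ C, v s := by
  have hA : (Cm \ C).card = (C \ Cm).card := by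
    have h1 := Finset.card_sdiff_add_card_inter Cm C
    have h2 := Finset.card_sdiff_add_card_inter C Cm
    rw [Finset.inter_comm] at h2
    omega
  have e := Finset.equivOfCardEq hA
  have key : ∑ a ∈ Cm \ C, v a ≤ ∑ b ∈ C \ Cm, v b := by
    rw [← Finset.sum_coe_sort (Cm \ C), ← Finset.sum_coe_sort (C \ Cm),
      ← Equiv.sum_comp e (fun b : (C \ Cm : Finset (Fin M)) => v b.1)]
    refine Finset.sum_le_sum fun a _ => ?_
    have ha : (a : Fin M) ∈ Cm := (Finset.mem_sdiff.mp a.2).1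
    have hb : ((e a : (C \ Cm : Finset (Fin M))) : Fin M) ∉ Cm :=
      (Finset.mem_sdiff.mp (e a).2).2
    exact hmin _ ha _ hb
  have h1 : ∑ s ∈ Cm, v s = ∑ s ∈ Cm ∩ C, v s + ∑ s ∈ Cm \ C, v s := by
    rw [Finset.sum_inter_add_sum_sdiff]
  have h2 : ∑ s ∈ C, v s = ∑ s ∈ C ∩ Cm, v s + ∑ s ∈ C \ Cm, v s := by
    rw [Finset.sum_inter_add_sum_sdiff]
  rw [h1, h2, Finset.inter_comm]
  linarith

lemma avg_mono {M : ℕ} (v : Fin M → ℝ) (m : ℕ) (hm : 1 ≤ m)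
    (Cm : Finset (Fin M)) (hCm : Cm.card = m)
    (hmin : ∀ s ∈ Cm, ∀ s' ∉ Cm, v s ≤ v s') :
    ∀ k : ℕ, m ≤ k → ∀ C : Finset (Fin M), C.card = k →
      (∑ s ∈ Cm, v s) / m ≤ (∑ s ∈ C, v s) / C.card := by
  refine Nat.le_induction ?_ ?_
  · intro C hC
    rw [hC]
    have := base_sum_le v Cm C (by rw [hC, hCm]) hmin
    push_cast
    gcongr

  · intro k hk IH C hC
    have hCne : C.Nonempty := Finset.card_pos.mp (by omega)
    obtain ⟨a, haC, hamax⟩ := Finset.exists_max_image C v hCne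
    have hcard' : (C.erase a).card = k := by
      rw [Finset.card_erase_of_mem haC, hC]; omega
    have IH' := IH (C.erase a) hcard'
    have hsum : ∑ s ∈ C.erase a, v s = (∑ s ∈ C, v s) - v a := by
      rw [Finset.sum_erase_eq_sub haC]
    have hS : ∑ s ∈ C, v s ≤ (k + 1 : ℝ) * v a := by
      have := Finset.sum_le_card_nsmul C v (v a) (fun x hx => hamax x hx)
      rw [hC] at this
      push_cast at this ⊢
      simpa [nsmul_eq_mul] using this
    have hk0 : (0:ℝ) < k := by exact_mod_cast (by omega : 0 < k)
    have hstep : (∑ s ∈ C.erase a, v s) / (C.erase a).card ≤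
        (∑ s ∈ C, v s) / C.card := by
      rw [hcard', hC, hsum]
      rw [div_le_div_iff₀ hk0 (by positivity)]
      push_cast
      nlinarith
    exact le_trans IH' hstep

/-- Minimizing the average over all subsets of at least m indices is achieved by
averaging the m smallest values (Proposition 2). -/
theorem stmt_6 {M : ℕ} (v : Fin M → ℝ) (m : ℕ) (hm : 1 ≤ m) (hmM : m ≤ M)
    (Cm : Finset (Fin M)) (hCm : Cm.card = m)
    (hmin : ∀ s ∈ Cm, ∀ s' ∉ Cm, v s ≤ v s') :
    IsLeast {x : ℝ | ∃ C : Finset (Fin M), m ≤ C.card ∧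
        x = (∑ s ∈ C, v s) / C.card}
      ((∑ s ∈ Cm, v s) / m) := by
  constructor
  · exact ⟨Cm, by rw [hCm], by rw [hCm]⟩
  · rintro x ⟨C, hCcard, rfl⟩
    exact avg_mono v m hm Cm hCm hmin C.card hCcard C rfl
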